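/- Let d ≥ 2 be an integer, let E ⊆ ℝ be an open interval, and let V, A : E → ℝ be differentiable with V(s) > 0, A(s) > 0, and V'(s) ≠ 0 for all s ∈ E. Define the inradius function r : E → ℝ by r(s) = d·V(s)/A(s), and wherever r'(s) ≠ 0 define the r-elasticity of volume e(s) = (V'(s)/r'(s)) · (r(s)/V(s)). Then there exists k > 0 with A(s)^d = k·V(s)^(d−1) for all s ∈ E (i.e., the family is homogeneous) if and only if r'(s) ≠ 0 and e(s) = d for all s ∈ E. -/

import Mathlib

/-!
Taking logarithms, homogeneity says that `φ = d log A - (d - 1) log V` is constant on `E`, i.e.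
(as `E` is an open interval) that `φ' = d A'/A - (d - 1) V'/V` vanishes on `E`. Since
`log r = log d + log V - log A`, the elasticity is `e = (V'/V) / (r'/r) = (V'/V) / (V'/V - A'/A)`,
and `e = d` is again the vanishing of `φ'`; then `r'/r = V'/(d V) ≠ 0` comes for free.
-/

open Real

theorem exists_eq_const_iff_hasDerivAt_eq_zero {𝕜 G : Type*} [RCLike 𝕜] [NormedAddCommGroup G]
    [NormedSpace 𝕜 G] {s : Set 𝕜} {f f' : 𝕜 → G} (hs : IsOpen s) (hs' : IsPreconnected s)
    (hf : ∀ x ∈ s, HasDerivAt f (f' x) x) :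
    (∃ c, ∀ x ∈ s, f x = c) ↔ ∀ x ∈ s, f' x = 0 := by
  constructor
  · rintro ⟨c, hc⟩ x hx
    have hfc : f =ᶠ[nhds x] fun _ => c := Filter.eventually_of_mem (hs.mem_nhds hx) hc
    exact (hf x hx).unique ((hasDerivAt_const x c).congr_of_eventuallyEq hfc)
  · intro hf'
    refine hs.exists_is_const_of_deriv_eq_zero hs'
      (fun x hx => (hf x hx).differentiableAt.differentiableWithinAt) fun x hx => ?_
    rw [(hf x hx).deriv, hf' x hx, Pi.zero_apply]

theorem exists_pow_eq_mul_pow_iff_exists_log_eq {ι : Type*} {E : Set ι} {A V : ι → ℝ} (m n : ℕ)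
    (hApos : ∀ s ∈ E, 0 < A s) (hVpos : ∀ s ∈ E, 0 < V s) :
    (∃ k : ℝ, 0 < k ∧ ∀ s ∈ E, A s ^ m = k * V s ^ n) ↔
      ∃ c : ℝ, ∀ s ∈ E, m * log (A s) - n * log (V s) = c := by
  constructor
  · rintro ⟨k, hk, hkey⟩
    refine ⟨log k, fun s hs => ?_⟩
    have hlog := congrArg log (hkey s hs)
    rw [log_pow, log_mul hk.ne' (pow_pos (hVpos s hs) n).ne', log_pow] at hlog
    linarith
  · rintro ⟨c, hc⟩
    refine ⟨exp c, exp_pos c, fun s hs => ?_⟩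
    rw [← hc s hs, exp_sub, ← log_pow, ← log_pow, exp_log (pow_pos (hApos s hs) m),
      exp_log (pow_pos (hVpos s hs) n), div_mul_cancel₀ _ (pow_pos (hVpos s hs) n).ne']

theorem hasDerivAt_mul_log_sub_mul_log {A V : ℝ → ℝ} {A' V' s : ℝ} (p q : ℝ)
    (hA : HasDerivAt A A' s) (hV : HasDerivAt V V' s) (hAs : A s ≠ 0) (hVs : V s ≠ 0) :
    HasDerivAt (fun t => p * log (A t) - q * log (V t)) (p * (A' / A s) - q * (V' / V s)) s :=
  ((hA.log hAs).const_mul p).sub ((hV.log hVs).const_mul q)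

theorem elasticity_eq_iff {d V V' A A' : ℝ} (hd : d ≠ 0) (hV : 0 < V) (hA : 0 < A)
    (hV' : V' ≠ 0) :
    (d * V' * A - d * V * A') / A ^ 2 ≠ 0 ∧
        V' / ((d * V' * A - d * V * A') / A ^ 2) * (d * V / A / V) = d ↔
      d * (A' / A) - (d - 1) * (V' / V) = 0 := by
  have hr' : (d * V' * A - d * V * A') / A ^ 2 = d * (V' * A - V * A') / A ^ 2 := by ring
  -- Also true at `u = 0`, where both sides are `0` by the convention `x / 0 = 0`.
  have he : ∀ u, V' / (d * u / A ^ 2) * (d * V / A / V) = V' * A / u := by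
    intro u
    rcases eq_or_ne u 0 with rfl | hu
    · simp
    · field_simp
  rw [hr', he, div_ne_zero_iff, mul_ne_zero_iff]
  constructor
  · rintro ⟨⟨⟨-, hu⟩, -⟩, he⟩
    rw [div_eq_iff hu] at he
    field_simp
    linear_combination he
  · intro h
    have hu : V' * A - V * A' = V' * A / d := by
      field_simp at h ⊢
      linear_combination -h
    rw [hu]
    refine ⟨⟨⟨hd, by positivity⟩, by positivity⟩, ?_⟩
    field_simp

/-- A family is homogeneous iff the `r`-elasticity of volume is identically `d`:
with inradius function `r(s) = d·V(s)/A(s)` and elasticity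
`e(s) = (V'(s)/r'(s))·(r(s)/V(s))`, one has `A^d = k·V^(d−1)` on `E` for some
`k > 0` iff `r'(s) ≠ 0` and `e(s) = d` for every `s ∈ E`. -/
theorem homogeneous_iff_elasticity_eq_dim (d : ℕ) (hd : 2 ≤ d)
    (E : Set ℝ) (hE : IsOpen E) (hE' : E.OrdConnected)
    (V V' A A' r r' : ℝ → ℝ)
    (hV : ∀ s ∈ E, HasDerivAt V (V' s) s)
    (hA : ∀ s ∈ E, HasDerivAt A (A' s) s)
    (hVpos : ∀ s ∈ E, 0 < V s) (hApos : ∀ s ∈ E, 0 < A s)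
    (hV'ne : ∀ s ∈ E, V' s ≠ 0)
    (hrdef : ∀ s, r s = d * V s / A s)
    (hr : ∀ s ∈ E, HasDerivAt r (r' s) s) :
    (∃ k : ℝ, 0 < k ∧ ∀ s ∈ E, A s ^ d = k * V s ^ (d - 1)) ↔
      (∀ s ∈ E, r' s ≠ 0 ∧ (V' s / r' s) * (r s / V s) = d) := by
  have hr' : ∀ s ∈ E, r' s = (d * V' s * A s - d * V s * A' s) / A s ^ 2 := fun s hs =>
    (hr s hs).unique <| funext hrdef ▸ ((hV s hs).const_mul (d : ℝ)).div (hA s hs) (hApos s hs).ne'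
  rw [exists_pow_eq_mul_pow_iff_exists_log_eq d (d - 1) hApos hVpos,
    exists_eq_const_iff_hasDerivAt_eq_zero hE hE'.isPreconnected fun s hs =>
      hasDerivAt_mul_log_sub_mul_log _ _ (hA s hs) (hV s hs) (hApos s hs).ne' (hVpos s hs).ne']
  refine forall₂_congr fun s hs => ?_
  rw [hr' s hs, hrdef s, elasticity_eq_iff (by positivity) (hVpos s hs) (hApos s hs) (hV'ne s hs),
    Nat.cast_sub (by omega : 1 ≤ d), Nat.cast_one]
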